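/- Let f : ℕ → ℂ satisfy f(2n) = f(n) for every n ≥ 1. If there exists a rational function R ∈ RatFunc ℂ whose Laurent expansion at 0 is the power series Σ_{n≥0} f(n) X^n (i.e. a_k(R) = f(k) for all k ≥ 0 and a_k(R) = 0 for all k < 0), then the denominator of R (in lowest terms) is squarefree; equivalently, all poles of R are simple. -/

import Mathlib

/-!
Write `F = ∑ f(n) Xⁿ` as `P / Q` in lowest terms. The hypothesis says `F(X) + F(-X) = 2 F(X²)`, and
comparing denominators gives `Q(X) Q(-X) = c Q(X²)`, so the root multiplicities of `Q` satisfy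
`m(a) + m(-a) = m(a²)` for `a ≠ 0`. If `α` is a root of maximal multiplicity `d`, every `α^(2^k)` is
then a root of multiplicity `d`. At such a root `a`, in the local coordinate `X = a (1 + t)`, the
leading coefficient of the principal part of `P / Q` gets multiplied by `2^(d-1)` under `a ↦ a²`,
because `X² = a² (1 + 2t + t²)`. Along the orbit of `α` it would take infinitely many values,
whereas the orbit lies in the finite set of roots of `Q`; hence `d = 1`.
-/

/-- The `n`-th coefficient of the Laurent expansion at `0` of a rational function. -/
noncomputable def coeffL (R : RatFunc ℂ) (n : ℤ) : ℂ :=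
  ((R : LaurentSeries ℂ)).coeff n

open Polynomial

section PowerSeries

variable {R : Type*} [CommRing R]

theorem PowerSeries.rescale_neg_one_coe (p : R[X]) :
    rescale (-1) (p : PowerSeries R) = ((p.comp (-Polynomial.X) : R[X]) : PowerSeries R) := by
  have key : (rescale (-1)).comp coeToPowerSeries.ringHom =
      (coeToPowerSeries.ringHom : R[X] →+* PowerSeries R).comp (compRingHom (-Polynomial.X)) := by
    refine Polynomial.ringHom_ext (fun a => ?_) ?_
    · ext n; simp +contextual [coeff_C]
    · simp
  exact congrArg (fun φ : R[X] →+* PowerSeries R => φ p) key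

theorem PowerSeries.expand_coe {n : ℕ} (hn : n ≠ 0) (p : R[X]) :
    expand n hn (p : PowerSeries R) = ((Polynomial.expand R n p : R[X]) : PowerSeries R) := by
  have key : (expand n hn).comp (coeToPowerSeries.algHom R) =
      (coeToPowerSeries.algHom R : R[X] →ₐ[R] PowerSeries R).comp (Polynomial.expand R n) := by
    apply Polynomial.algHom_ext; simp
  exact congrArg (fun φ : R[X] →ₐ[R] PowerSeries R => φ p) key

theorem PowerSeries.mk_add_rescale_neg_one_mk {f : ℕ → R} (hf : ∀ n, f (2 * n) = f n) :
    mk f + rescale (-1) (mk f) = 2 * expand 2 two_ne_zero (mk f) := by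
  ext n
  rw [map_add, coeff_rescale, two_mul, map_add, coeff_expand, coeff_mk]
  obtain ⟨m, rfl | rfl⟩ := Nat.even_or_odd' n
  · simp [hf, pow_mul]
  · simp [pow_succ, pow_mul, Nat.not_two_dvd_bit1]

theorem Polynomial.add_comp_neg_X_mul_expand_eq_of_coe_mul_eq {P Q : R[X]} {F : PowerSeries R}
    (hF : (Q : PowerSeries R) * F = P)
    (hfun : F + PowerSeries.rescale (-1) F = 2 * PowerSeries.expand 2 two_ne_zero F) :
    (Q.comp (-X) * P + Q * P.comp (-X)) * expand R 2 Q = 2 * (Q * Q.comp (-X)) * expand R 2 P := by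
  have hneg := congrArg (PowerSeries.rescale (-1)) hF
  have hexp := congrArg (PowerSeries.expand 2 two_ne_zero) hF
  simp only [map_mul, PowerSeries.rescale_neg_one_coe, PowerSeries.expand_coe] at hneg hexp
  apply Polynomial.coe_injective (R := R)
  have h2 : ((2 : R[X]) : PowerSeries R) = 2 := map_ofNat coeToPowerSeries.ringHom 2
  simp only [Polynomial.coe_mul, Polynomial.coe_add, h2]
  linear_combination (-(Q.comp (-X) : PowerSeries R) * (expand R 2 Q : PowerSeries R)) * hF
    - ((Q : PowerSeries R) * (expand R 2 Q : PowerSeries R)) * hneg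
    + 2 * ((Q : PowerSeries R) * (Q.comp (-X) : PowerSeries R)) * hexp
    + ((Q : PowerSeries R) * (Q.comp (-X) : PowerSeries R) * (expand R 2 Q : PowerSeries R)) * hfun

end PowerSeries

theorem RatFunc.denom_mul_eq_num_of_coe_eq {K : Type*} [Field K] {r : RatFunc K}
    {F : PowerSeries K} (h : (r : LaurentSeries K) = F) :
    (r.denom : PowerSeries K) * F = r.num := by
  apply HahnSeries.ofPowerSeries_injective (Γ := ℤ)
  have key : (r.denom : RatFunc K) * r = r.num := by
    rw [mul_comm]
    exact (eq_div_iff (RatFunc.algebraMap_ne_zero r.denom_ne_zero)).mp r.num_div_denom.symm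
  rw [map_mul, ← h, RatFunc.coe_coe, RatFunc.coe_coe, ← map_mul, key]

theorem IsCoprime.eval_ne_zero_of_isRoot {R : Type*} [CommRing R] [Nontrivial R] {P Q : R[X]}
    (h : IsCoprime P Q) {a : R} (ha : Q.IsRoot a) : P.eval a ≠ 0 := by
  intro hP
  obtain ⟨x, y, hxy⟩ := h
  simpa [hP, ha.eq_zero] using congrArg (eval a) hxy

theorem Polynomial.eval_zero_ne_zero_of_coe_mul_eq {R : Type*} [CommRing R] [Nontrivial R]
    {P Q : R[X]} {F : PowerSeries R} (hPQ : IsCoprime P Q) (hF : (Q : PowerSeries R) * F = P) :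
    Q.eval 0 ≠ 0 := by
  intro hQ
  refine hPQ.eval_ne_zero_of_isRoot hQ ?_
  rw [← coeff_zero_eq_eval_zero] at hQ ⊢
  have := congrArg PowerSeries.constantCoeff hF
  simpa [hQ] using this.symm

theorem Polynomial.rootMultiplicity_comp_neg_X {R : Type*} [CommRing R] (p : R[X]) (a : R) :
    (p.comp (-X)).rootMultiplicity a = p.rootMultiplicity (-a) := by
  simpa using rootMultiplicity_comp_C_mul_X_add_C p (-1) 0 a isUnit_one.neg

section Domain

variable {R : Type*} [CommRing R] [IsDomain R] [NeZero (2 : R)]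

theorem Polynomial.rootMultiplicity_expand_two (p : R[X]) {a : R} (ha : a ≠ 0) :
    (expand R 2 p).rootMultiplicity a = p.rootMultiplicity (a ^ 2) := by
  obtain rfl | hp := eq_or_ne p 0; · simp
  obtain ⟨g, hg, hndvd⟩ := p.exists_eq_pow_rootMultiplicity_mul_and_not_dvd hp (a ^ 2)
  have hg0 : g.eval (a ^ 2) ≠ 0 := fun h => hndvd (dvd_iff_isRoot.mpr h)
  have hfac : expand R 2 p = ((X + C a) ^ p.rootMultiplicity (a ^ 2) * expand R 2 g) *
      (X - C a) ^ p.rootMultiplicity (a ^ 2) := by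
    conv_lhs => rw [hg]
    rw [map_mul, map_pow, map_sub, expand_X, expand_C, C_pow,
      show (X : R[X]) ^ 2 - C a ^ 2 = (X - C a) * (X + C a) by ring, mul_pow]
    ring
  have hev : ((X + C a) ^ p.rootMultiplicity (a ^ 2) * expand R 2 g).eval a ≠ 0 := by
    rw [eval_mul, eval_pow, expand_eval, eval_add, eval_X, eval_C, ← two_mul]
    exact mul_ne_zero (pow_ne_zero _ (mul_ne_zero (NeZero.ne 2) ha)) hg0
  rw [hfac, rootMultiplicity_mul_X_sub_C_pow (fun h => hev (by rw [h, eval_zero])),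
    rootMultiplicity_eq_zero hev, zero_add]

end Domain

namespace Polynomial

variable {K : Type*} [Field K] {P Q : K[X]} {c a : K}

theorem exists_mul_comp_neg_X_eq_C_mul_expand [NeZero (2 : K)] (hPQ : IsCoprime P Q) (hQ : Q ≠ 0)
    (h : (Q.comp (-X) * P + Q * P.comp (-X)) * expand K 2 Q =
      2 * (Q * Q.comp (-X)) * expand K 2 P) :
    ∃ c : K, c ≠ 0 ∧ Q * Q.comp (-X) = C c * expand K 2 Q ∧
      Q.comp (-X) * P + Q * P.comp (-X) = C (2 * c) * expand K 2 P := by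
  have hQn : Q.comp (-X) ≠ 0 := comp_neg_X_eq_zero_iff.not.mpr hQ
  have hdvd : expand K 2 Q ∣ Q * Q.comp (-X) := by
    have h2 : IsUnit (2 : K[X]) := by
      rw [← map_ofNat C]; exact isUnit_C.mpr (NeZero.ne 2).isUnit
    refine h2.dvd_mul_left.mp ((hPQ.map (expand K 2).toRingHom).symm.dvd_of_dvd_mul_right ?_)
    exact ⟨_, (h.symm.trans (mul_comm _ _))⟩
  have hdeg : (Q * Q.comp (-X)).natDegree = (expand K 2 Q).natDegree := by
    rw [natDegree_mul hQ hQn, natDegree_comp, natDegree_neg, natDegree_X, natDegree_expand]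
    ring
  obtain ⟨u, hu⟩ := associated_of_dvd_of_natDegree_le hdvd (mul_ne_zero hQ hQn) hdeg.le
  obtain ⟨c, hc, hcu⟩ := Polynomial.isUnit_iff.mp u.isUnit
  have h1 : Q * Q.comp (-X) = C c * expand K 2 Q := by rw [← hu, ← hcu, mul_comm]
  refine ⟨c, hc.ne_zero, h1, mul_right_cancel₀ ((expand_ne_zero two_pos).mpr hQ) ?_⟩
  rw [h, h1, C_mul, map_ofNat]
  ring

theorem rootMultiplicity_add_rootMultiplicity_neg [NeZero (2 : K)] (hQ : Q ≠ 0)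
    (h : Q * Q.comp (-X) = C c * expand K 2 Q) (ha : a ≠ 0) :
    Q.rootMultiplicity a + Q.rootMultiplicity (-a) = Q.rootMultiplicity (a ^ 2) := by
  have hQn : Q.comp (-X) ≠ 0 := comp_neg_X_eq_zero_iff.not.mpr hQ
  have := congrArg (rootMultiplicity a) h
  rwa [rootMultiplicity_mul (mul_ne_zero hQ hQn), rootMultiplicity_comp_neg_X,
    rootMultiplicity_mul (h ▸ mul_ne_zero hQ hQn), rootMultiplicity_C, zero_add,
    rootMultiplicity_expand_two Q ha] at this

theorem eval_divByMonic_mul_eval_neg (h : Q * Q.comp (-X) = C c * expand K 2 Q)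
    (ha : Q.rootMultiplicity (a ^ 2) = Q.rootMultiplicity a) :
    (Q /ₘ (X - C a) ^ Q.rootMultiplicity a).eval a * Q.eval (-a) =
      c * (2 * a) ^ Q.rootMultiplicity a *
        (Q /ₘ (X - C (a ^ 2)) ^ Q.rootMultiplicity (a ^ 2)).eval (a ^ 2) := by
  have hfac₁ := pow_mul_divByMonic_rootMultiplicity_eq Q a
  have hfac₂ := pow_mul_divByMonic_rootMultiplicity_eq Q (a ^ 2)
  rw [ha] at hfac₂ ⊢
  set d := Q.rootMultiplicity a
  set U₁ := Q /ₘ (X - C a) ^ d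
  set U₂ := Q /ₘ (X - C (a ^ 2)) ^ d
  have hcancel : U₁ * Q.comp (-X) = C c * ((X + C a) ^ d * expand K 2 U₂) := by
    refine mul_left_cancel₀ (pow_ne_zero d (X_sub_C_ne_zero a)) ?_
    rw [← mul_assoc, hfac₁, h]
    conv_lhs => rw [← hfac₂]
    rw [map_mul, map_pow, map_sub, expand_X, expand_C, C_pow,
      show (X : K[X]) ^ 2 - C a ^ 2 = (X - C a) * (X + C a) by ring, mul_pow]
    ring
  have := congrArg (eval a) hcancel
  simp only [eval_mul, eval_comp, eval_neg, eval_X, eval_pow, eval_add, eval_C,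
    expand_eval] at this
  rw [this, two_mul]
  ring

theorem eval_neg_mul_eval_of_isRoot
    (h : Q.comp (-X) * P + Q * P.comp (-X) = C (2 * c) * expand K 2 P) (ha : Q.IsRoot a) :
    Q.eval (-a) * P.eval a = 2 * c * P.eval (a ^ 2) := by
  have := congrArg (eval a) h
  simpa [ha.eq_zero, expand_eval] using this

/-- If `Q = (X - z) ^ m * U` with `U(z) ≠ 0`, the principal part of `P / Q` at `z` begins with
`P(z) / (U(z) (X - z) ^ m)`; this is its coefficient in the local coordinate `t` of
`X = z (1 + t)`. -/
noncomputable def polarCoeff (P Q : K[X]) (z : K) : K :=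
  P.eval z / ((Q /ₘ (X - C z) ^ Q.rootMultiplicity z).eval z * z ^ Q.rootMultiplicity z)

theorem polarCoeff_sq [NeZero (2 : K)] (hQ : Q ≠ 0) (hc : c ≠ 0)
    (h₁ : Q * Q.comp (-X) = C c * expand K 2 Q)
    (h₂ : Q.comp (-X) * P + Q * P.comp (-X) = C (2 * c) * expand K 2 P)
    (ha : a ≠ 0) (hroot : Q.IsRoot a)
    (hmult : Q.rootMultiplicity (a ^ 2) = Q.rootMultiplicity a) :
    polarCoeff P Q (a ^ 2) = 2 ^ (Q.rootMultiplicity a - 1) * polarCoeff P Q a := by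
  have hI := eval_divByMonic_mul_eval_neg h₁ hmult
  have hII := eval_neg_mul_eval_of_isRoot h₂ hroot
  have hu₁ := eval_divByMonic_pow_rootMultiplicity_ne_zero a hQ
  have hu₂ := eval_divByMonic_pow_rootMultiplicity_ne_zero (a ^ 2) hQ
  have hd : 0 < Q.rootMultiplicity a := (rootMultiplicity_pos hQ).mpr hroot
  unfold polarCoeff
  rw [hmult] at hI hu₂ ⊢
  set d := Q.rootMultiplicity a
  set u₁ := (Q /ₘ (X - C a) ^ d).eval a
  set u₂ := (Q /ₘ (X - C (a ^ 2)) ^ d).eval (a ^ 2)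
  clear_value u₁ u₂ d
  obtain ⟨e, rfl⟩ : ∃ e, d = e + 1 := ⟨d - 1, by omega⟩
  rw [Nat.add_sub_cancel]
  field_simp
  refine mul_left_cancel₀ (mul_ne_zero two_ne_zero hc) ?_
  linear_combination (P.eval a * a ^ (e + 1)) * hI - (u₁ * a ^ (e + 1)) * hII

theorem exists_forall_rootMultiplicity_le (Q : K[X]) (a : K) :
    ∃ b, Q.rootMultiplicity a ≤ Q.rootMultiplicity b ∧
      ∀ z, Q.rootMultiplicity z ≤ Q.rootMultiplicity b := by
  classical
  obtain ⟨b, -, hb⟩ := (insert a Q.roots.toFinset).exists_max_image (Q.rootMultiplicity ·)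
    (Finset.insert_nonempty _ _)
  refine ⟨b, hb a (Finset.mem_insert_self _ _), fun z => ?_⟩
  by_cases hz : z ∈ Q.roots.toFinset
  · exact hb z (Finset.mem_insert_of_mem hz)
  · rw [← count_roots, Multiset.count_eq_zero.mpr (Multiset.mem_toFinset.not.mp hz)]
    exact Nat.zero_le _

theorem squarefree_of_rootMultiplicity_le_one [IsAlgClosed K] (hQ : Q ≠ 0)
    (h : ∀ a, Q.rootMultiplicity a ≤ 1) : Squarefree Q := by
  classical
  refine ((nodup_roots_iff_of_splits hQ (IsAlgClosed.splits Q)).mp ?_).squarefree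
  exact Multiset.nodup_iff_count_le_one.mpr fun a => (count_roots Q).trans_le (h a)

theorem rootMultiplicity_pow_two_pow [NeZero (2 : K)] (hQ : Q ≠ 0)
    (h₁ : Q * Q.comp (-X) = C c * expand K 2 Q)
    (ha : a ≠ 0) (hmax : ∀ z, Q.rootMultiplicity z ≤ Q.rootMultiplicity a) (k : ℕ) :
    Q.rootMultiplicity (a ^ 2 ^ k) = Q.rootMultiplicity a := by
  induction k with
  | zero => simp
  | succ k ih =>
    have h := rootMultiplicity_add_rootMultiplicity_neg hQ h₁ (pow_ne_zero (2 ^ k) ha)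
    rw [pow_succ, pow_mul]
    have := hmax ((a ^ 2 ^ k) ^ 2)
    omega

theorem polarCoeff_pow_two_pow [NeZero (2 : K)] (hQ : Q ≠ 0) (hc : c ≠ 0)
    (h₁ : Q * Q.comp (-X) = C c * expand K 2 Q)
    (h₂ : Q.comp (-X) * P + Q * P.comp (-X) = C (2 * c) * expand K 2 P) (ha : a ≠ 0)
    (hroot : Q.IsRoot a) (hmax : ∀ z, Q.rootMultiplicity z ≤ Q.rootMultiplicity a) (k : ℕ) :
    polarCoeff P Q (a ^ 2 ^ k) = (2 ^ (Q.rootMultiplicity a - 1)) ^ k * polarCoeff P Q a := by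
  induction k with
  | zero => simp
  | succ k ih =>
    have hk := rootMultiplicity_pow_two_pow hQ h₁ ha hmax k
    have hk' := rootMultiplicity_pow_two_pow hQ h₁ ha hmax (k + 1)
    rw [pow_succ, pow_mul] at hk' ⊢
    have hrootk : Q.IsRoot (a ^ 2 ^ k) := by
      rw [← rootMultiplicity_pos hQ, hk, rootMultiplicity_pos hQ]; exact hroot
    rw [polarCoeff_sq hQ hc h₁ h₂ (pow_ne_zero _ ha) hrootk (hk'.trans hk.symm), ih, hk]
    ring

theorem squarefree_of_mul_comp_neg_X_eq [IsAlgClosed K] [CharZero K] (hPQ : IsCoprime P Q)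
    (hQ0 : Q.eval 0 ≠ 0) (hc : c ≠ 0) (h₁ : Q * Q.comp (-X) = C c * expand K 2 Q)
    (h₂ : Q.comp (-X) * P + Q * P.comp (-X) = C (2 * c) * expand K 2 P) : Squarefree Q := by
  have hQ : Q ≠ 0 := by rintro rfl; simp at hQ0
  refine squarefree_of_rootMultiplicity_le_one hQ fun a => ?_
  by_contra! ha
  obtain ⟨α, hαa, hmax⟩ := exists_forall_rootMultiplicity_le Q a
  have hroot : Q.IsRoot α := (rootMultiplicity_pos hQ).mp (by omega)
  have hα : α ≠ 0 := by rintro rfl; exact hQ0 hroot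
  have hB : polarCoeff P Q α ≠ 0 := div_ne_zero (hPQ.eval_ne_zero_of_isRoot hroot)
    (mul_ne_zero (eval_divByMonic_pow_rootMultiplicity_ne_zero α hQ) (pow_ne_zero _ hα))
  have hinj : Function.Injective fun k : ℕ => polarCoeff P Q (α ^ 2 ^ k) := by
    intro i j hij
    simp only [polarCoeff_pow_two_pow hQ hc h₁ h₂ hα hroot hmax] at hij
    have hpow : ((2 ^ (Q.rootMultiplicity α - 1)) ^ i : ℕ) =
        (2 ^ (Q.rootMultiplicity α - 1)) ^ j := by
      exact_mod_cast mul_right_cancel₀ hB hij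
    exact Nat.pow_right_injective (Nat.one_lt_two_pow (by omega)) hpow
  refine Set.infinite_range_of_injective hinj
    (((finite_setOfPred_isRoot hQ).image (polarCoeff P Q)).subset ?_)
  rintro _ ⟨k, rfl⟩
  refine ⟨α ^ 2 ^ k, ?_, rfl⟩
  rw [Set.mem_ofPred_eq, ← rootMultiplicity_pos hQ, rootMultiplicity_pow_two_pow hQ h₁ hα hmax k]
  omega

end Polynomial

theorem coe_eq_mk_of_coeffL {f : ℕ → ℂ} {R : RatFunc ℂ}
    (hcoeff : ∀ k : ℕ, coeffL R (k : ℤ) = f k) (hneg : ∀ k : ℤ, k < 0 → coeffL R k = 0) :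
    (R : LaurentSeries ℂ) = PowerSeries.mk f := by
  ext n
  rw [PowerSeries.coeff_coe]
  split_ifs with hn
  · exact hneg n hn
  · rw [PowerSeries.coeff_mk, ← hcoeff, Int.natAbs_of_nonneg (not_lt.mp hn)]
    rfl

theorem stmt_17 (f : ℕ → ℂ) (hf : ∀ n : ℕ, 1 ≤ n → f (2 * n) = f n)
    (R : RatFunc ℂ)
    (hcoeff : ∀ k : ℕ, coeffL R (k : ℤ) = f k)
    (hneg : ∀ k : ℤ, k < 0 → coeffL R k = 0) :
    Squarefree R.denom := by
  have hQF := RatFunc.denom_mul_eq_num_of_coe_eq (coe_eq_mk_of_coeffL hcoeff hneg)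
  have hfun := PowerSeries.mk_add_rescale_neg_one_mk (f := f) fun n => by
    rcases n.eq_zero_or_pos with rfl | hn
    · rfl
    · exact hf n hn
  obtain ⟨c, hc, h₁, h₂⟩ := exists_mul_comp_neg_X_eq_C_mul_expand R.isCoprime_num_denom
    R.denom_ne_zero (add_comp_neg_X_mul_expand_eq_of_coe_mul_eq hQF hfun)
  exact squarefree_of_mul_comp_neg_X_eq R.isCoprime_num_denom
    (eval_zero_ne_zero_of_coe_mul_eq R.isCoprime_num_denom hQF) hc h₁ h₂
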